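/- arXiv:1411.3530 — 4 statements merged into one kernel-verified Lean document; each statement's English description precedes it below -/
import Mathlib

section
/- Let Γ=(G,σ) be a weighted signed graph and let f₁, …, f_k : V → ℝ be k nonzero functions with pairwise disjoint supports (supp(f) = {u : f(u) ≠ 0}). Then λ_k(Δ^σ) ≤ 2 max_{1≤i≤k} R^σ_{μ_d}(f_i). -/
/-!
The functions `√d · fᵢ` are nonzero with disjoint supports, so they span a `k`-dimensional space,
and by the min–max principle it suffices to bound the quadratic form of the symmetric normalized
Laplacian on that span.  For `g = Σ aᵢ fᵢ` the form is the energy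
`½ Σ_{u,v} w(u,v) (g u - σ(u,v) g v)²` and the squared norm is `Σ_u d(u) g(u)²`.  Disjointness
splits the norm exactly into `Σ aᵢ² Σ_u d(u) fᵢ(u)²`, while each edge term involves at most two of
the `fᵢ` (the one supported at `u` and the one supported at `v`), so Cauchy–Schwarz bounds it by
twice `Σ aᵢ² w(u,v) (fᵢ u - σ(u,v) fᵢ v)²`: this is where the factor `2` comes from.
-/

open Finset Real

open scoped Classical

noncomputable section

namespace SignedGraph

variable {N : ℕ}

/-- The degree `d(u) = Σ_v w(u,v)` of a vertex. -/
def deg (w : Fin N → Fin N → ℝ) (u : Fin N) : ℝ := ∑ v, w u v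

/-- Hypotheses making `(w, sgn)` a weighted signed graph: `w` is a symmetric nonnegative
weight function vanishing on the diagonal and `sgn` is a symmetric `±1`-valued signature. -/
structure IsWSG {N : ℕ} (w : Fin N → Fin N → ℝ) (sgn : Fin N → Fin N → ℝ) : Prop where
  w_symm : ∀ u v, w u v = w v u
  w_nonneg : ∀ u v, 0 ≤ w u v
  w_loopless : ∀ u, w u u = 0
  sgn_symm : ∀ u v, sgn u v = sgn v u
  sgn_pm : ∀ u v, sgn u v = 1 ∨ sgn u v = -1

/-- The signature obtained from `sgn` by switching with the function `θ : V → {±1}`. -/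
def switchSgn (sgn : Fin N → Fin N → ℝ) (θ : Fin N → ℝ) : Fin N → Fin N → ℝ :=
  fun u v => θ u * sgn u v * θ v

/-- The signed adjacency matrix `A^σ`, `A^σ_{uv} = σ(u,v) w(u,v)`. -/
def adj (w sgn : Fin N → Fin N → ℝ) : Matrix (Fin N) (Fin N) ℝ :=
  Matrix.of fun u v => sgn u v * w u v

/-- The symmetric form `I - D^{-1/2} A^σ D^{-1/2}` of the signed normalized Laplacian,
whose eigenvalues are those of `Δ^σ = I - D^{-1} A^σ`. -/
def nlapSym (w sgn : Fin N → Fin N → ℝ) : Matrix (Fin N) (Fin N) ℝ :=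
  Matrix.of fun u v =>
    (if u = v then (1 : ℝ) else 0) -
      sgn u v * w u v / (Real.sqrt (deg w u) * Real.sqrt (deg w v))

/-- The signed (Kirchhoff) Laplacian `L^σ = D - A^σ`. -/
def lap (w sgn : Fin N → Fin N → ℝ) : Matrix (Fin N) (Fin N) ℝ :=
  Matrix.diagonal (deg w) - adj w sgn

/-- The nondecreasing enumeration of the eigenvalues (with multiplicity) of a real
symmetric matrix; junk value `0` if the matrix is not symmetric.  `evals M ⟨k-1,_⟩`
is the `k`-th smallest eigenvalue `λ_k(M)`. -/
def evals (M : Matrix (Fin N) (Fin N) ℝ) : Fin N → ℝ :=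
  if h : M.IsHermitian then (fun i => h.eigenvalues (Tuple.sort h.eigenvalues i)) else 0

/-- The signed Rayleigh quotient `R^σ_μ(f)`. -/
def rayleigh (w sgn : Fin N → Fin N → ℝ) (μ : Fin N → ℝ) (f : Fin N → ℝ) : ℝ :=
  ((1 : ℝ) / 2 * ∑ u, ∑ v, w u v * (f u - sgn u v * f v) ^ 2) / (∑ u, μ u * f u ^ 2)

end SignedGraph

open Matrix WithLp

section Spectral

variable {ι : Type*} [Fintype ι]

theorem OrthonormalBasis.dotProduct_eq_sum (b : OrthonormalBasis ι ℝ (EuclideanSpace ℝ ι))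
    (x y : ι → ℝ) : x ⬝ᵥ y = ∑ j, (ofLp (b j) ⬝ᵥ x) * (ofLp (b j) ⬝ᵥ y) := by
  have := b.sum_inner_mul_inner (toLp 2 x) (toLp 2 y)
  simp only [EuclideanSpace.inner_eq_star_dotProduct, star_trivial] at this
  rw [dotProduct_comm, ← this]
  exact Finset.sum_congr rfl fun j _ => by rw [dotProduct_comm y]

theorem Matrix.IsHermitian.dotProduct_mulVec_eq_sum [DecidableEq ι] {M : Matrix ι ι ℝ}
    (hM : M.IsHermitian) (x : ι → ℝ) :
    x ⬝ᵥ M *ᵥ x = ∑ j, hM.eigenvalues j * (ofLp (hM.eigenvectorBasis j) ⬝ᵥ x) ^ 2 := by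
  rw [hM.eigenvectorBasis.dotProduct_eq_sum]
  refine Finset.sum_congr rfl fun j _ => ?_
  have hsymm : Mᵀ = M := by simpa [conjTranspose_eq_transpose_of_trivial] using hM.eq
  rw [dotProduct_mulVec, ← mulVec_transpose, hsymm, hM.mulVec_eigenvectorBasis, smul_dotProduct,
    smul_eq_mul]
  ring

end Spectral

section DisjointSupports

variable {ι : Type*} [Fintype ι]

theorem linearIndependent_of_disjoint_support {α R : Type*} [Ring R] [NoZeroDivisors R]
    {f : ι → α → R} (hne : ∀ i, f i ≠ 0) (hdisj : ∀ i j, i ≠ j → ∀ u, f i u = 0 ∨ f j u = 0) :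
    LinearIndependent R f := by
  refine Fintype.linearIndependent_iff.mpr fun a ha j => ?_
  obtain ⟨u, hu⟩ := Function.ne_iff.mp (hne j)
  have hsum := congrFun ha u
  rw [Finset.sum_apply, Finset.sum_eq_single j
    (fun i _ hij => by simp [(hdisj i j hij u).resolve_right hu]) (by simp)] at hsum
  exact (mul_eq_zero.mp hsum).resolve_right hu

theorem card_filter_ne_zero_le_one {α R : Type*} [Zero R] {f : ι → α → R}
    (hdisj : ∀ i j, i ≠ j → ∀ u, f i u = 0 ∨ f j u = 0) (u : α) :
    #{i | f i u ≠ 0} ≤ 1 := by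
  refine Finset.card_le_one.mpr fun i hi j hj => ?_
  by_contra hij
  simp only [Finset.mem_filter, Finset.mem_univ, true_and] at hi hj
  exact (hdisj i j hij u).elim hi hj

theorem sq_sum_eq_sum_sq_of_mul_eq_zero {R : Type*} [CommSemiring R] (t : ι → R)
    (ht : ∀ i j, i ≠ j → t i * t j = 0) : (∑ i, t i) ^ 2 = ∑ i, t i ^ 2 := by
  rw [sq, Finset.sum_mul_sum]
  refine Finset.sum_congr rfl fun i _ => ?_
  rw [Finset.sum_eq_single i (fun j _ hji => ht i j hji.symm) (by simp), sq]

theorem sq_sum_le_card_mul_sum_sq_of_support_subset (t : ι → ℝ) (s : Finset ι)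
    (hs : ∀ i, t i ≠ 0 → i ∈ s) : (∑ i, t i) ^ 2 ≤ #s * ∑ i, t i ^ 2 := by
  have hsupp : ∑ i ∈ s, t i = ∑ i, t i :=
    Finset.sum_subset (Finset.subset_univ s) fun i _ hi => by_contra fun h => hi (hs i h)
  calc (∑ i, t i) ^ 2 = (∑ i ∈ s, t i) ^ 2 := by rw [hsupp]
    _ ≤ #s * ∑ i ∈ s, t i ^ 2 := sq_sum_le_card_mul_sum_sq
    _ ≤ #s * ∑ i, t i ^ 2 := by
      gcongr
      exact Finset.subset_univ s

theorem sum_mul_sq_sum_smul {α R : Type*} [Fintype α] [CommSemiring R] {f : ι → α → R}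
    (hdisj : ∀ i j, i ≠ j → ∀ u, f i u = 0 ∨ f j u = 0) (μ : α → R) (a : ι → R) :
    ∑ u, μ u * (∑ i, a i • f i) u ^ 2 = ∑ i, a i ^ 2 * ∑ u, μ u * f i u ^ 2 := by
  have hsq : ∀ u, (∑ i, a i • f i) u ^ 2 = ∑ i, a i ^ 2 * f i u ^ 2 := by
    intro u
    rw [Finset.sum_apply, sq_sum_eq_sum_sq_of_mul_eq_zero]
    · simp [mul_pow]
    · intro i j hij
      rcases hdisj i j hij u with h | h <;> simp [h]
  simp only [hsq, Finset.mul_sum]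
  rw [Finset.sum_comm]
  exact Finset.sum_congr rfl fun i _ => Finset.sum_congr rfl fun u _ => by ring

theorem sum_mul_sq_pos {α : Type*} [Fintype α] {μ f : α → ℝ} (hμ : ∀ u, 0 < μ u) (hf : f ≠ 0) :
    0 < ∑ u, μ u * f u ^ 2 := by
  obtain ⟨u, hu⟩ := Function.ne_iff.mp hf
  exact Finset.sum_pos' (fun v _ => mul_nonneg (hμ v).le (sq_nonneg _))
    ⟨u, Finset.mem_univ u, mul_pos (hμ u) (pow_two_pos_of_ne_zero hu)⟩

end DisjointSupports

namespace SignedGraph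

variable {N : ℕ}

theorem evals_mul_dotProduct_le {M : Matrix (Fin N) (Fin N) ℝ} (hM : M.IsHermitian) (i : Fin N)
    {x : Fin N → ℝ}
    (hx : ∀ j < i, ofLp (hM.eigenvectorBasis (Tuple.sort hM.eigenvalues j)) ⬝ᵥ x = 0) :
    evals M i * (x ⬝ᵥ x) ≤ x ⬝ᵥ M *ᵥ x := by
  set τ := Tuple.sort hM.eigenvalues
  rw [evals, dif_pos hM, hM.dotProduct_mulVec_eq_sum, hM.eigenvectorBasis.dotProduct_eq_sum,
    Finset.mul_sum, ← Equiv.sum_comp τ]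
  conv_rhs => rw [← Equiv.sum_comp τ]
  refine Finset.sum_le_sum fun j _ => ?_
  rcases lt_or_ge j i with hji | hij
  · simp [hx j hji]
  · rw [← sq]
    exact mul_le_mul_of_nonneg_right (Tuple.monotone_sort hM.eigenvalues hij) (sq_nonneg _)

/-- The upper half of the Courant–Fischer min–max principle. -/
theorem evals_le_of_dotProduct_mulVec_le {M : Matrix (Fin N) (Fin N) ℝ} (hM : M.IsHermitian)
    {W : Submodule ℝ (Fin N → ℝ)} {i : Fin N} (hi : (i : ℕ) < Module.finrank ℝ W) {c : ℝ}
    (hc : ∀ x ∈ W, x ⬝ᵥ M *ᵥ x ≤ c * (x ⬝ᵥ x)) : evals M i ≤ c := by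
  set e : Fin i → Fin N → ℝ := fun j =>
    ofLp (hM.eigenvectorBasis (Tuple.sort hM.eigenvalues (Fin.castLE i.isLt.le j)))
  have hker : LinearMap.ker ((Matrix.of e).mulVecLin ∘ₗ W.subtype) ≠ ⊥ :=
    LinearMap.ker_ne_bot_of_finrank_lt (by simpa using hi)
  obtain ⟨⟨x, hxW⟩, hx, hx0⟩ := (Submodule.ne_bot_iff _).mp hker
  have hperp : ∀ j < i, ofLp (hM.eigenvectorBasis (Tuple.sort hM.eigenvalues j)) ⬝ᵥ x = 0 :=
    fun j hj => congrFun hx ⟨j, hj⟩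
  have hpos : 0 < x ⬝ᵥ x := by
    simpa using dotProduct_star_self_pos_iff.mpr (Subtype.coe_ne_coe.mpr hx0)
  exact le_of_mul_le_mul_right ((evals_mul_dotProduct_le hM i hperp).trans (hc x hxW)) hpos

def energy (w sgn : Fin N → Fin N → ℝ) (f : Fin N → ℝ) : ℝ :=
  (1 : ℝ) / 2 * ∑ u, ∑ v, w u v * (f u - sgn u v * f v) ^ 2

section Energy

variable {w sgn : Fin N → Fin N → ℝ}

theorem rayleigh_eq_energy_div (μ f : Fin N → ℝ) :
    rayleigh w sgn μ f = energy w sgn f / ∑ u, μ u * f u ^ 2 := rfl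

theorem energy_le_mul_of_rayleigh_le {μ f : Fin N → ℝ} (hμ : ∀ u, 0 < μ u) (hf : f ≠ 0) {R : ℝ}
    (hR : rayleigh w sgn μ f ≤ R) : energy w sgn f ≤ R * ∑ u, μ u * f u ^ 2 := by
  rwa [← div_le_iff₀ (sum_mul_sq_pos hμ hf), ← rayleigh_eq_energy_div]

theorem nlapSym_isHermitian (hG : IsWSG w sgn) : (nlapSym w sgn).IsHermitian := by
  ext u v
  simp only [conjTranspose_apply, star_trivial, nlapSym, of_apply]
  rw [hG.w_symm v u, hG.sgn_symm v u, mul_comm (√(deg w v))]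
  congr 1
  exact if_congr eq_comm rfl rfl

theorem energy_eq (hG : IsWSG w sgn) (f : Fin N → ℝ) :
    energy w sgn f = ∑ u, deg w u * f u ^ 2 - ∑ u, ∑ v, sgn u v * w u v * f u * f v := by
  have hsq : ∀ u v, w u v * (f u - sgn u v * f v) ^ 2
      = w u v * f u ^ 2 + w v u * f v ^ 2 - 2 * (sgn u v * w u v * f u * f v) := by
    intro u v
    have hsgn : sgn u v ^ 2 = 1 := by rcases hG.sgn_pm u v with h | h <;> simp [h]
    linear_combination (w u v * f v ^ 2) * hsgn + f v ^ 2 * hG.w_symm u v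
  have hswap : ∑ u, ∑ v, w v u * f v ^ 2 = ∑ u, deg w u * f u ^ 2 := by
    rw [Finset.sum_comm]
    simp only [← Finset.sum_mul, deg]
  simp only [energy, hsq, Finset.sum_add_distrib, Finset.sum_sub_distrib, ← Finset.mul_sum,
    ← Finset.sum_mul, hswap]
  simp only [deg]
  ring

theorem dotProduct_sqrt_deg_mul_self (hd : ∀ u, 0 ≤ deg w u) (f : Fin N → ℝ) :
    (fun u => √(deg w u) * f u) ⬝ᵥ (fun u => √(deg w u) * f u) = ∑ u, deg w u * f u ^ 2 :=
  Finset.sum_congr rfl fun u _ => by linear_combination f u ^ 2 * Real.sq_sqrt (hd u)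

theorem dotProduct_nlapSym_mulVec (hG : IsWSG w sgn) (hd : ∀ u, 0 < deg w u) (f : Fin N → ℝ) :
    (fun u => √(deg w u) * f u) ⬝ᵥ nlapSym w sgn *ᵥ (fun u => √(deg w u) * f u) =
      energy w sgn f := by
  have hsqrt : ∀ u, √(deg w u) ≠ 0 := fun u => (Real.sqrt_pos.mpr (hd u)).ne'
  rw [energy_eq hG, ← dotProduct_sqrt_deg_mul_self (fun u => (hd u).le)]
  simp only [dotProduct, mulVec, nlapSym, of_apply, sub_mul, Finset.sum_sub_distrib, ite_mul,
    one_mul, zero_mul, Finset.sum_ite_eq, Finset.mem_univ, if_true, mul_sub, Finset.mul_sum]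
  congr 1
  refine Finset.sum_congr rfl fun u _ => Finset.sum_congr rfl fun v _ => ?_
  field_simp [hsqrt u, hsqrt v]

theorem energy_sum_smul_le {ι : Type*} [Fintype ι] {f : ι → Fin N → ℝ} (hw : ∀ u v, 0 ≤ w u v)
    (hdisj : ∀ i j, i ≠ j → ∀ u, f i u = 0 ∨ f j u = 0) (a : ι → ℝ) :
    energy w sgn (∑ i, a i • f i) ≤ 2 * ∑ i, a i ^ 2 * energy w sgn (f i) := by
  have hdiff : ∀ u v, (∑ i, a i • f i) u - sgn u v * (∑ i, a i • f i) v =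
      ∑ i, a i * (f i u - sgn u v * f i v) := by
    intro u v
    simp only [Finset.sum_apply, Pi.smul_apply, smul_eq_mul, Finset.mul_sum,
      ← Finset.sum_sub_distrib]
    exact Finset.sum_congr rfl fun i _ => by ring
  have hsq : ∀ u v, (∑ i, a i * (f i u - sgn u v * f i v)) ^ 2 ≤
      2 * ∑ i, (a i * (f i u - sgn u v * f i v)) ^ 2 := by
    intro u v
    set s : Finset ι := ({i | f i u ≠ 0} : Finset ι) ∪ ({i | f i v ≠ 0} : Finset ι)
    have hsupp : ∀ i, a i * (f i u - sgn u v * f i v) ≠ 0 → i ∈ s := by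
      intro i hi
      by_contra hnot
      simp only [s, Finset.mem_union, Finset.mem_filter, Finset.mem_univ, true_and, not_or,
        not_not] at hnot
      simp [hnot.1, hnot.2] at hi
    have hcard : (#s : ℝ) ≤ 2 := by
      have := (Finset.card_union_le _ _).trans (add_le_add (card_filter_ne_zero_le_one hdisj u)
        (card_filter_ne_zero_le_one hdisj v))
      exact_mod_cast this.trans_eq one_add_one_eq_two
    exact (sq_sum_le_card_mul_sum_sq_of_support_subset _ _ hsupp).trans
      (mul_le_mul_of_nonneg_right hcard (Finset.sum_nonneg fun i _ => sq_nonneg _))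
  calc energy w sgn (∑ i, a i • f i)
      = 1 / 2 * ∑ u, ∑ v, w u v * (∑ i, a i * (f i u - sgn u v * f i v)) ^ 2 := by
        simp only [energy, hdiff]
    _ ≤ 1 / 2 * ∑ u, ∑ v, w u v * (2 * ∑ i, (a i * (f i u - sgn u v * f i v)) ^ 2) := by
        gcongr with u _ v _
        exacts [hw u v, hsq u v]
    _ = 2 * ∑ i, a i ^ 2 * energy w sgn (f i) := by
        simp only [energy, Finset.mul_sum, mul_pow]
        conv_lhs => enter [2, u]; rw [Finset.sum_comm]
        rw [Finset.sum_comm]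
        exact Finset.sum_congr rfl fun i _ => Finset.sum_congr rfl fun u _ =>
          Finset.sum_congr rfl fun v _ => by ring

end Energy

/-- For `k` nonzero functions with pairwise disjoint supports,
`λ_k(Δ^σ) ≤ 2 max_{1≤i≤k} R^σ_{μ_d}(f_i)`. -/
theorem eigenvalue_le_of_disjoint_supports {N k : ℕ} (w sgn : Fin N → Fin N → ℝ)
    (hG : IsWSG w sgn) (hd : ∀ u, 0 < deg w u) (hk1 : 1 ≤ k) (hk2 : k ≤ N)
    (f : Fin k → Fin N → ℝ) (hne : ∀ i, f i ≠ 0)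
    (hdisj : ∀ i j, i ≠ j → ∀ u, f i u = 0 ∨ f j u = 0) :
    evals (nlapSym w sgn) ⟨k - 1, by omega⟩ ≤
      2 * ⨆ i, rayleigh w sgn (deg w) (f i) := by
  set R := ⨆ i, rayleigh w sgn (deg w) (f i)
  have hsqrt : ∀ u, √(deg w u) ≠ 0 := fun u => (Real.sqrt_pos.mpr (hd u)).ne'
  set φ : Fin k → Fin N → ℝ := fun i u => √(deg w u) * f i u
  have hφ : LinearIndependent ℝ φ := linearIndependent_of_disjoint_support
    (fun i h => hne i (funext fun u => by simpa [φ, hsqrt u] using congrFun h u))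
    (fun i j hij u => by simpa [φ, hsqrt u] using hdisj i j hij u)
  refine evals_le_of_dotProduct_mulVec_le (nlapSym_isHermitian hG)
    (W := Submodule.span ℝ (Set.range φ)) (by simp [finrank_span_eq_card hφ]; omega) ?_
  intro x hx
  obtain ⟨a, rfl⟩ := (Submodule.mem_span_range_iff_exists_fun ℝ).mp hx
  have hφa : ∑ i, a i • φ i = fun u => √(deg w u) * (∑ i, a i • f i) u := by
    ext u
    simp [φ, Finset.sum_apply, Finset.mul_sum, mul_left_comm]
  have henergy (i : Fin k) : energy w sgn (f i) ≤ R * ∑ u, deg w u * f i u ^ 2 :=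
    energy_le_mul_of_rayleigh_le hd (hne i)
      (le_ciSup (f := fun j => rayleigh w sgn (deg w) (f j)) (Set.finite_range _).bddAbove i)
  rw [hφa, dotProduct_nlapSym_mulVec hG hd, dotProduct_sqrt_deg_mul_self (fun u => (hd u).le),
    sum_mul_sq_sum_smul hdisj]
  calc energy w sgn (∑ i, a i • f i) ≤ 2 * ∑ i, a i ^ 2 * energy w sgn (f i) :=
        energy_sum_smul_le hG.w_nonneg hdisj a
    _ ≤ 2 * ∑ i, a i ^ 2 * (R * ∑ u, deg w u * f i u ^ 2) := by
        gcongr with i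
        exact henergy i
    _ = 2 * R * ∑ i, a i ^ 2 * ∑ u, deg w u * f i u ^ 2 := by
        rw [mul_assoc, Finset.mul_sum _ _ R]
        exact congrArg _ (Finset.sum_congr rfl fun i _ => by ring)

end SignedGraph
end
end

section
/- For a ∈ [−1,1] and t ∈ [0,1] define Y(a,t) = 1 if a ≥ √t, Y(a,t) = −1 if a ≤ −√t, and Y(a,t) = 0 otherwise. Then for all a, b ∈ [−1,1] and every s ∈ {+1,−1}: ∫₀¹ |Y(a,t) − s·Y(b,t)| dt ≤ |a − s·b| · (|a| + |b|). -/
/-!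
For every `t`, `Y a t = sgn a · 1[t ≤ a²]`. For signs `u, v = ±1` and sets `A, B` one has
`|u·1_A − v·1_B| = 1_A + 1_B − (1 + uv)·1_{A ∩ B}`, so the integral equals
`a² + b² − (1 + uv)·min(a², b²)` with `u = sgn a`, `v = s·sgn b`. Writing `a = u|a|` and
`s·b = v|b|`: if `uv = 1` this is `|a² − b²| = ||a| − |b||·(|a| + |b|) = |a − s·b|·(|a| + |b|)`;
if `uv = −1` it is `a² + b² ≤ (|a| + |b|)² = |a − s·b|·(|a| + |b|)`.
-/

open Real

noncomputable section

/-- The rounding function: `Y a t = 1` if `a ≥ √t`, `Y a t = -1` if `a ≤ -√t`,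
and `Y a t = 0` otherwise. -/
def Y (a t : ℝ) : ℝ :=
  if Real.sqrt t ≤ a then 1 else if a ≤ -Real.sqrt t then -1 else 0

open MeasureTheory Set

/-- Unlike `Real.sign`, `sgn 0 = 1`, matching the first clause of `Y`. -/
def sgn (a : ℝ) : ℝ := if 0 ≤ a then 1 else -1

lemma sgn_eq_one_or_neg_one (a : ℝ) : sgn a = 1 ∨ sgn a = -1 := by
  unfold sgn; split_ifs <;> simp

lemma mul_sgn_eq_one_or_neg_one {s : ℝ} (hs : s = 1 ∨ s = -1) (a : ℝ) :
    s * sgn a = 1 ∨ s * sgn a = -1 := by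
  rcases hs with rfl | rfl <;> rcases sgn_eq_one_or_neg_one a with h | h <;> simp [h]

lemma sgn_mul_abs (a : ℝ) : sgn a * |a| = a := by
  unfold sgn; split_ifs with h
  · simp [abs_of_nonneg h]
  · simp [abs_of_neg (not_le.mp h)]

lemma Y_eq_sgn_mul_indicator (a t : ℝ) : Y a t = sgn a * (Iic (a ^ 2)).indicator 1 t := by
  have hle : a ≤ -√t ↔ 0 ≤ -a ∧ t ≤ a ^ 2 := by
    rw [le_neg, sqrt_le_iff, neg_sq]
  unfold Y sgn
  simp only [sqrt_le_iff, hle]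
  by_cases hta : t ≤ a ^ 2
  · rcases le_or_gt 0 a with h | h
    · simp [h, hta]
    · simp [h.le, not_le.mpr h, hta]
  · simp [hta]

lemma abs_mul_indicator_sub_mul_indicator {α : Type*} {u v : ℝ} (hu : u = 1 ∨ u = -1)
    (hv : v = 1 ∨ v = -1) (A B : Set α) (x : α) :
    |u * A.indicator 1 x - v * B.indicator 1 x| =
      A.indicator 1 x + B.indicator 1 x - (1 + u * v) * (A ∩ B).indicator 1 x := by
  by_cases hA : x ∈ A <;> by_cases hB : x ∈ B <;>
    rcases hu with rfl | rfl <;> rcases hv with rfl | rfl <;> norm_num [hA, hB]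

lemma intervalIntegrable_indicator_one {s : Set ℝ} (hs : MeasurableSet s) (a b : ℝ) :
    IntervalIntegrable (s.indicator (1 : ℝ → ℝ)) volume a b := by
  rw [intervalIntegrable_iff]
  exact (integrableOn_const (by simp)).indicator hs

lemma integral_indicator_Iic {a b p : ℝ} (hap : a ≤ p) (hpb : p ≤ b) :
    ∫ t in a..b, (Iic p).indicator 1 t = p - a := by
  rw [intervalIntegral.integral_of_le (hap.trans hpb), integral_indicator_one measurableSet_Iic,
    measureReal_restrict_apply measurableSet_Iic, Iic_inter_Ioc_of_le hpb,
    volume_real_Ioc_of_le hap]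

lemma integral_abs_Y_sub {a b s : ℝ} (ha : a ^ 2 ≤ 1) (hb : b ^ 2 ≤ 1) (hs : s = 1 ∨ s = -1) :
    ∫ t in (0 : ℝ)..1, |Y a t - s * Y b t| =
      a ^ 2 + b ^ 2 - (1 + sgn a * (s * sgn b)) * min (a ^ 2) (b ^ 2) := by
  have hY (t : ℝ) : |Y a t - s * Y b t| =
      (Iic (a ^ 2)).indicator 1 t + (Iic (b ^ 2)).indicator 1 t -
        (1 + sgn a * (s * sgn b)) * (Iic (min (a ^ 2) (b ^ 2))).indicator 1 t := by
    rw [Y_eq_sgn_mul_indicator, Y_eq_sgn_mul_indicator, ← mul_assoc, ← Iic_inter_Iic,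
      abs_mul_indicator_sub_mul_indicator (sgn_eq_one_or_neg_one a)
        (mul_sgn_eq_one_or_neg_one hs b)]
  have hint (p : ℝ) := intervalIntegrable_indicator_one (measurableSet_Iic (a := p)) 0 1
  simp_rw [hY]
  rw [intervalIntegral.integral_sub ((hint _).add (hint _)) ((hint _).const_mul _),
    intervalIntegral.integral_add (hint _) (hint _), intervalIntegral.integral_const_mul,
    integral_indicator_Iic (sq_nonneg a) ha, integral_indicator_Iic (sq_nonneg b) hb,
    integral_indicator_Iic (le_min (sq_nonneg a) (sq_nonneg b)) (min_le_of_left_le ha)]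
  ring

lemma sq_add_sq_sub_le {u v α β : ℝ} (hu : u = 1 ∨ u = -1) (hv : v = 1 ∨ v = -1)
    (hα : 0 ≤ α) (hβ : 0 ≤ β) :
    α ^ 2 + β ^ 2 - (1 + u * v) * min (α ^ 2) (β ^ 2) ≤ |u * α - v * β| * (α + β) := by
  wlog h : α ≤ β generalizing u v α β
  · have := this hv hu hβ hα (le_of_not_ge h)
    rw [min_comm, mul_comm v u, abs_sub_comm] at this
    linarith
  rw [min_eq_left (pow_le_pow_left₀ hα h 2)]
  rcases hu with rfl | rfl <;> rcases hv with rfl | rfl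
  · rw [abs_of_nonpos (by linarith)]; nlinarith
  · rw [abs_of_nonneg (by linarith)]; nlinarith
  · rw [abs_of_nonpos (by linarith)]; nlinarith
  · rw [abs_of_nonneg (by linarith)]; nlinarith

/-- For all `a, b ∈ [-1,1]` and `s ∈ {+1,-1}`,
`∫₀¹ |Y(a,t) − s·Y(b,t)| dt ≤ |a − s·b|·(|a| + |b|)`. -/
theorem integral_Y_le (a b s : ℝ) (ha : a ∈ Set.Icc (-1 : ℝ) 1)
    (hb : b ∈ Set.Icc (-1 : ℝ) 1) (hs : s = 1 ∨ s = -1) :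
    ∫ t in (0 : ℝ)..1, |Y a t - s * Y b t| ≤ |a - s * b| * (|a| + |b|) := by
  have ha2 : a ^ 2 ≤ 1 := sq_le_one_iff_abs_le_one a |>.2 (abs_le.2 ha)
  have hb2 : b ^ 2 ≤ 1 := sq_le_one_iff_abs_le_one b |>.2 (abs_le.2 hb)
  have key := sq_add_sq_sub_le (sgn_eq_one_or_neg_one a) (mul_sgn_eq_one_or_neg_one hs b)
    (abs_nonneg a) (abs_nonneg b)
  rw [sq_abs, sq_abs, sgn_mul_abs, mul_assoc, sgn_mul_abs] at key
  rw [integral_abs_Y_sub ha2 hb2 hs]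
  exact key

end
end

section
/- Fix k ≥ 1 and for nonzero x, y ∈ ℝ^k let d_P(x,y) = min( ‖x/‖x‖ − y/‖y‖‖, ‖x/‖x‖ + y/‖y‖‖ ) (Euclidean norm). Let S be a nonempty set of nonzero vectors in ℝ^k, let 0 < ε < 2, and define θ(x) = max(0, 1 − (inf_{s∈S} d_P(x,s))/ε) for nonzero x. Then for all nonzero x, y ∈ ℝ^k: |θ(x) − θ(y)| · ‖y‖ ≤ (2/ε) · ‖x − y‖. -/
open Real

noncomputable section

/-- The projective-space pseudometric on nonzero vectors of `ℝ^k`: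
`d_P(x,y) = min(‖x/‖x‖ − y/‖y‖‖, ‖x/‖x‖ + y/‖y‖‖)`. -/
def dP {k : ℕ} (x y : EuclideanSpace ℝ (Fin k)) : ℝ :=
  min ‖(‖x‖)⁻¹ • x - (‖y‖)⁻¹ • y‖ ‖(‖x‖)⁻¹ • x + (‖y‖)⁻¹ • y‖

/-- The cut-off function `θ(x) = max(0, 1 − d_P(x,S)/ε)`, where
`d_P(x,S) = inf_{s∈S} d_P(x,s)`. -/
def cutoff {k : ℕ} (S : Set (EuclideanSpace ℝ (Fin k))) (ε : ℝ)
    (x : EuclideanSpace ℝ (Fin k)) : ℝ :=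
  max 0 (1 - sInf (dP x '' S) / ε)

lemma dP_nonneg {k : ℕ} (x y : EuclideanSpace ℝ (Fin k)) : 0 ≤ dP x y :=
  le_min (norm_nonneg _) (norm_nonneg _)

lemma dP_comm {k : ℕ} (x y : EuclideanSpace ℝ (Fin k)) : dP x y = dP y x := by
  unfold dP
  rw [norm_sub_rev, add_comm]

lemma dP_triangle {k : ℕ} (x y z : EuclideanSpace ℝ (Fin k)) :
    dP x z ≤ dP x y + dP y z := by
  unfold dP
  set u := (‖x‖)⁻¹ • x
  set v := (‖y‖)⁻¹ • y
  set w := (‖z‖)⁻¹ • z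
  rcases le_total ‖u - v‖ ‖u + v‖ with h1 | h1 <;>
    rcases le_total ‖v - w‖ ‖v + w‖ with h2 | h2
  · rw [min_eq_left h1, min_eq_left h2]
    refine le_trans (min_le_left _ _) ?_
    calc ‖u - w‖ = ‖(u - v) + (v - w)‖ := by congr 1; abel
      _ ≤ ‖u - v‖ + ‖v - w‖ := norm_add_le _ _
  · rw [min_eq_left h1, min_eq_right h2]
    refine le_trans (min_le_right _ _) ?_
    calc ‖u + w‖ = ‖(u - v) + (v + w)‖ := by congr 1; abel
      _ ≤ ‖u - v‖ + ‖v + w‖ := norm_add_le _ _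
  · rw [min_eq_right h1, min_eq_left h2]
    refine le_trans (min_le_right _ _) ?_
    calc ‖u + w‖ = ‖(u + v) - (v - w)‖ := by congr 1; abel
      _ ≤ ‖u + v‖ + ‖v - w‖ := norm_sub_le _ _
  · rw [min_eq_right h1, min_eq_right h2]
    refine le_trans (min_le_left _ _) ?_
    calc ‖u - w‖ = ‖(u + v) - (v + w)‖ := by congr 1; abel
      _ ≤ ‖u + v‖ + ‖v + w‖ := norm_sub_le _ _

lemma sInf_dP_le {k : ℕ} {S : Set (EuclideanSpace ℝ (Fin k))} (hS : S.Nonempty)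
    (x y : EuclideanSpace ℝ (Fin k)) :
    sInf (dP x '' S) ≤ dP x y + sInf (dP y '' S) := by
  rw [← sub_le_iff_le_add']
  apply le_csInf (hS.image _)
  rintro _ ⟨s, hs, rfl⟩
  rw [sub_le_iff_le_add']
  refine le_trans (csInf_le ⟨0, ?_⟩ ⟨s, hs, rfl⟩) (dP_triangle x y s)
  rintro _ ⟨t, _, rfl⟩; exact dP_nonneg _ _

/-- For a nonempty set `S` of nonzero vectors of `ℝ^k` and `0 < ε < 2`,
the cut-off function satisfies `|θ(x) − θ(y)|·‖y‖ ≤ (2/ε)·‖x − y‖` for all nonzero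
`x, y ∈ ℝ^k`. -/
theorem cutoff_lipschitz {k : ℕ} (hk : 1 ≤ k) (S : Set (EuclideanSpace ℝ (Fin k)))
    (hS : S.Nonempty) (hS0 : ∀ s ∈ S, s ≠ 0) (ε : ℝ) (hε0 : 0 < ε) (hε2 : ε < 2)
    (x y : EuclideanSpace ℝ (Fin k)) (hx : x ≠ 0) (hy : y ≠ 0) :
    |cutoff S ε x - cutoff S ε y| * ‖y‖ ≤ (2 / ε) * ‖x - y‖ := by
  have hxn : (0:ℝ) < ‖x‖ := norm_pos_iff.mpr hx
  have hyn : (0:ℝ) < ‖y‖ := norm_pos_iff.mpr hy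
  -- Step 1: dP x y * ‖y‖ ≤ 2 * ‖x - y‖
  have key : dP x y * ‖y‖ ≤ 2 * ‖x - y‖ := by
    have h1 : dP x y ≤ ‖(‖x‖)⁻¹ • x - (‖y‖)⁻¹ • y‖ := min_le_left _ _
    have h2 : ‖y‖ * ‖(‖x‖)⁻¹ • x - (‖y‖)⁻¹ • y‖ = ‖(‖y‖ * (‖x‖)⁻¹) • x - y‖ := by
      rw [← norm_smul_of_nonneg hyn.le, smul_sub, smul_smul, smul_smul,
        mul_inv_cancel₀ hyn.ne', one_smul]
    have h3 : ‖(‖y‖ * (‖x‖)⁻¹) • x - y‖ ≤ 2 * ‖x - y‖ := by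
      have := norm_add_le ((‖y‖ * (‖x‖)⁻¹) • x - x) (x - y)
      have heq : (‖y‖ * (‖x‖)⁻¹) • x - x + (x - y) = (‖y‖ * (‖x‖)⁻¹) • x - y := by abel
      rw [heq] at this
      refine this.trans ?_
      have h4 : ‖(‖y‖ * (‖x‖)⁻¹) • x - x‖ = |‖y‖ - ‖x‖| := by
        rw [show (‖y‖ * (‖x‖)⁻¹) • x - x = (‖y‖ * (‖x‖)⁻¹ - 1) • x by
          rw [sub_smul, one_smul], norm_smul, Real.norm_eq_abs]
        rw [show ‖y‖ * (‖x‖)⁻¹ - 1 = (‖y‖ - ‖x‖) * (‖x‖)⁻¹ by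
          field_simp, abs_mul, abs_of_nonneg (inv_nonneg.mpr hxn.le)]
        field_simp
      rw [h4]
      have h5 : |‖y‖ - ‖x‖| ≤ ‖x - y‖ := by
        rw [norm_sub_rev]; exact abs_norm_sub_norm_le y x
      linarith
    calc dP x y * ‖y‖ ≤ ‖(‖x‖)⁻¹ • x - (‖y‖)⁻¹ • y‖ * ‖y‖ :=
          mul_le_mul_of_nonneg_right h1 hyn.le
      _ = ‖y‖ * ‖(‖x‖)⁻¹ • x - (‖y‖)⁻¹ • y‖ := mul_comm _ _
      _ = ‖(‖y‖ * (‖x‖)⁻¹) • x - y‖ := h2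
      _ ≤ 2 * ‖x - y‖ := h3
  -- Step 2: |cutoff S ε x - cutoff S ε y| ≤ dP x y / ε
  have hInf : |sInf (dP x '' S) - sInf (dP y '' S)| ≤ dP x y := by
    rw [abs_sub_le_iff]
    constructor
    · have := sInf_dP_le hS x y; linarith
    · have := sInf_dP_le hS y x; rw [dP_comm y x] at this; linarith
  have hcut : |cutoff S ε x - cutoff S ε y| ≤ dP x y / ε := by
    unfold cutoff
    rw [max_comm 0 _, max_comm 0 (1 - sInf (dP y '' S) / ε)]
    refine le_trans (abs_max_sub_max_le_abs _ _ _) ?_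
    rw [show (1 - sInf (dP x '' S) / ε) - (1 - sInf (dP y '' S) / ε)
        = (sInf (dP y '' S) - sInf (dP x '' S)) / ε by ring]
    rw [abs_div, abs_of_pos hε0, abs_sub_comm]
    gcongr
  calc |cutoff S ε x - cutoff S ε y| * ‖y‖ ≤ (dP x y / ε) * ‖y‖ :=
        mul_le_mul_of_nonneg_right hcut hyn.le
    _ = (dP x y * ‖y‖) / ε := by ring
    _ ≤ (2 * ‖x - y‖) / ε := by gcongr
    _ = (2 / ε) * ‖x - y‖ := by ring

end
end

section
/- Let k ≥ 1 and let 0 = t₀ ≤ t₁ ≤ … ≤ t_{2k} = M with M > 0. Let T = {−t_{2k}, …, −t₁, 0, t₁, …, t_{2k}} ⊂ ℝ, let η(x) = min_{t∈T} |x − t| be the distance from x to the grid T, and let F(a) = ∫₀^a η(x) dx for a ∈ [−M, M]. Then for all a, b ∈ [−M, M] and every s ∈ {+1,−1}: |F(a) − s·F(b)| ≤ ½ |a − s·b| · ( |a − s·b| + η(a) + η(b) ). -/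
open Real

noncomputable section

/-- `η(x)`: the distance from `x` to the symmetric grid `T = {±t_i}`. -/
def eta {n : ℕ} (t : Fin n → ℝ) (x : ℝ) : ℝ :=
  sInf {d | ∃ i, d = |x - t i| ∨ d = |x + t i|}

/-- `F(a) = ∫₀^a η(x) dx`. -/
def intF {n : ℕ} (t : Fin n → ℝ) (a : ℝ) : ℝ :=
  ∫ x in (0 : ℝ)..a, eta t x

namespace EtaAux

variable {n : ℕ} (t : Fin n → ℝ)

lemma bdd (x : ℝ) : BddBelow {d | ∃ i, d = |x - t i| ∨ d = |x + t i|} := by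
  refine ⟨0, fun d hd => ?_⟩
  obtain ⟨i, h | h⟩ := hd <;> simp [h, abs_nonneg]

lemma eta_nonneg (x : ℝ) : 0 ≤ eta t x := by
  apply Real.sInf_nonneg
  rintro d ⟨i, h | h⟩ <;> simp [h, abs_nonneg]

lemma eta_le_sub (x : ℝ) (i : Fin n) : eta t x ≤ |x - t i| :=
  csInf_le (bdd t x) ⟨i, Or.inl rfl⟩

lemma eta_le_add (x : ℝ) (i : Fin n) : eta t x ≤ |x + t i| :=
  csInf_le (bdd t x) ⟨i, Or.inr rfl⟩

lemma lip [NeZero n] (x y : ℝ) : eta t x ≤ eta t y + |x - y| := by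
  have hne : {d | ∃ i, d = |y - t i| ∨ d = |y + t i|}.Nonempty :=
    ⟨|y - t 0|, 0, Or.inl rfl⟩
  have h : eta t x - |x - y| ≤ eta t y := by
    apply le_csInf hne
    rintro d ⟨i, rfl | rfl⟩
    · have h1 : eta t x ≤ |x - t i| := eta_le_sub t x i
      have h2 : |x - t i| ≤ |x - y| + |y - t i| := abs_sub_le x y (t i)
      linarith
    · have h1 : eta t x ≤ |x + t i| := eta_le_add t x i
      have h2 : |x + t i| ≤ |x - y| + |y + t i| := by
        calc |x + t i| = |(x - y) + (y + t i)| := by ring_nf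
        _ ≤ |x - y| + |y + t i| := abs_add_le _ _
      linarith
  linarith

lemma eta_neg (x : ℝ) : eta t (-x) = eta t x := by
  unfold eta
  congr 1
  ext d
  constructor <;> rintro ⟨i, h | h⟩
  · exact ⟨i, Or.inr (by rw [h, show -x - t i = -(x + t i) by ring, abs_neg])⟩
  · exact ⟨i, Or.inl (by rw [h, show -x + t i = -(x - t i) by ring, abs_neg])⟩
  · exact ⟨i, Or.inr (by rw [h, show x - t i = -(-x + t i) by ring, abs_neg])⟩
  · exact ⟨i, Or.inl (by rw [h, show x + t i = -(-x - t i) by ring, abs_neg])⟩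

lemma eta_continuous [NeZero n] : Continuous (eta t) := by
  have : LipschitzWith 1 (eta t) := by
    apply LipschitzWith.of_dist_le_mul
    intro x y
    rw [Real.dist_eq, Real.dist_eq, NNReal.coe_one, one_mul]
    rw [abs_sub_le_iff]
    constructor
    · have := lip t x y; linarith
    · have := lip t y x; rw [abs_sub_comm] at this; linarith
  exact this.continuous

lemma intF_neg [NeZero n] (a : ℝ) : intF t (-a) = - intF t a := by
  have h := intervalIntegral.integral_comp_neg (a := a) (b := (0 : ℝ))
    (fun x => eta t x)
  simp only [neg_zero] at h
  unfold intF
  rw [← h, intervalIntegral.integral_symm]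
  congr 1
  apply intervalIntegral.integral_congr
  intro x _
  exact (eta_neg t x)

lemma key [NeZero n] (a c : ℝ) :
    |intF t a - intF t c| ≤ 1 / 2 * |a - c| * (|a - c| + eta t a + eta t c) := by
  have hcont : Continuous (eta t) := eta_continuous t
  have hdiff : intF t a - intF t c = ∫ x in c..a, eta t x := by
    unfold intF
    rw [← intervalIntegral.integral_add_adjacent_intervals
      (hcont.intervalIntegrable 0 c) (hcont.intervalIntegrable c a)]
    ring
  rw [hdiff]
  have hb : ∀ x ∈ Set.uIoc c a,
      ‖eta t x‖ ≤ 1 / 2 * (|a - c| + eta t a + eta t c) := by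
    intro x hx
    have h1 : eta t x ≤ eta t a + |x - a| := lip t x a
    have h2 : eta t x ≤ eta t c + |x - c| := lip t x c
    have h3 : |x - a| + |x - c| = |a - c| := by
      rcases Set.mem_uIoc.mp hx with ⟨ha, hb⟩ | ⟨ha, hb⟩
      · rw [abs_of_nonpos (by linarith), abs_of_nonneg (by linarith),
          abs_of_nonneg (by linarith)]; ring
      · rw [abs_of_nonneg (by linarith), abs_of_nonpos (by linarith),
          abs_of_nonpos (by linarith)]; ring
    rw [Real.norm_eq_abs, abs_of_nonneg (eta_nonneg t x)]
    linarith
  have hint := intervalIntegral.norm_integral_le_of_norm_le_const hb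
  rw [Real.norm_eq_abs] at hint
  calc |∫ x in c..a, eta t x| ≤
      1 / 2 * (|a - c| + eta t a + eta t c) * |a - c| := hint
    _ = 1 / 2 * |a - c| * (|a - c| + eta t a + eta t c) := by ring

end EtaAux

/-- Let `0 = t₀ ≤ t₁ ≤ … ≤ t_{2k} = M`, `M > 0`, and let `η` be the
distance to the grid `T = {−t_{2k},…,−t₁,0,t₁,…,t_{2k}}` and `F(a) = ∫₀^a η`.  Then for all
`a, b ∈ [−M, M]` and `s ∈ {±1}`:
`|F(a) − s·F(b)| ≤ ½ |a − s·b| (|a − s·b| + η(a) + η(b))`. -/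
theorem intF_estimate (k : ℕ) (hk : 1 ≤ k) (M : ℝ) (hM : 0 < M)
    (t : Fin (2 * k + 1) → ℝ) (hmono : Monotone t) (ht0 : t 0 = 0)
    (htM : t (Fin.last (2 * k)) = M) :
    ∀ a ∈ Set.Icc (-M) M, ∀ b ∈ Set.Icc (-M) M, ∀ s : ℝ, s = 1 ∨ s = -1 →
      |intF t a - s * intF t b| ≤
        1 / 2 * |a - s * b| * (|a - s * b| + eta t a + eta t b) := by
  haveI : NeZero (2 * k + 1) := ⟨Nat.succ_ne_zero _⟩
  intro a _ b _ s hs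
  rcases hs with rfl | rfl
  · simpa using EtaAux.key t a b
  · have h := EtaAux.key t a (-b)
    rw [EtaAux.intF_neg, EtaAux.eta_neg] at h; simp only [sub_neg_eq_add] at h
    have e1 : a - (-1) * b = a + b := by ring
    have e2 : intF t a - (-1) * intF t b = intF t a + intF t b := by ring
    rw [e1, e2]
    exact h

end
end
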